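/- Let κ be regular uncountable and λ ≥ κ. A set X ⊆ {s ∈ P_κ(λ) : s ∩ κ ∈ κ} is stationary in P_κ(λ) if and only if for every function g : λ^{<ω} → λ there exists s ∈ X closed under g (i.e., g''(s^{<ω}) ⊆ s). -/

import Mathlib

open Cardinal Set

/-- The ordinal corresponding to an element of the canonical type `o.ToType` of
order type `o`. -/
noncomputable def ordAt {o : Ordinal} (x : o.ToType) : Ordinal :=
  ((Ordinal.ToType.mk (o := o)).symm x : Set.Iio o).1

/-- `P_κ(λ)`, realized as the collection of subsets of the canonical type of order
type `o` (for `o = λ.ord`) of cardinality `< κ`. -/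
def Pkl (κ : Cardinal) (o : Ordinal) : Set (Set o.ToType) := {s | #s < κ}

/-- Club subsets of `(P_κ(λ), ⊆)`: subfamilies of `P_κ(λ)` closed under unions of
`⊆`-increasing chains of length `< κ` and cofinal in `(P_κ(λ), ⊆)`. -/
def IsClubK (κ : Cardinal) (o : Ordinal) (C : Set (Set o.ToType)) : Prop :=
  C ⊆ Pkl κ o ∧
  (∀ D : Set (Set o.ToType),
      D ⊆ C → D.Nonempty → IsChain (· ⊆ ·) D → #D < κ → ⋃₀ D ∈ C) ∧
  (∀ s ∈ Pkl κ o, ∃ t ∈ C, s ⊆ t)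

/-- Stationary subsets of `P_κ(λ)`: sets meeting every club. -/
def IsStatK (κ : Cardinal) (o : Ordinal) (X : Set (Set o.ToType)) : Prop :=
  ∀ C, IsClubK κ o C → (X ∩ C).Nonempty

/-- `s ∩ κ ∈ κ`: the intersection of `s` with (the copy of) `κ` is an initial
segment of `κ`, i.e. an ordinal `< κ`. -/
def InterKappaInKappa (κ : Cardinal) {o : Ordinal} (s : Set o.ToType) : Prop :=
  ∃ β : Ordinal, β < κ.ord ∧
    ∀ x : o.ToType, (x ∈ s ∧ ordAt x < κ.ord) ↔ ordAt x < β

/-!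
Closure points of any `g : λ^{<ω} → λ` form a club, so a stationary `X` contains one. Conversely,
given a club `C`, choose a `⊆`-monotone assignment `e ↦ F e ∈ C` on finite sets `e` with `e ⊆ F e`.
A single function `g` can code, for each finite `e`, the order type `|F e| < κ` and an enumeration
of `F e` along it. If `s` is closed under `g` and `s ∩ κ` is an ordinal, then `s` contains these
order types, hence their enumerations, so `s = ⋃_{e ⊆ s} F e`. This union lies in `C`: by
induction on `|s|`, an infinite `s` is the union of a chain of `|s|` smaller initial segments.
-/

universe u

section Cardinality

variable {α : Type u}

lemma mk_setOf_forall_mem_list_le (s : Set α) :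
    #{l : List α | ∀ x ∈ l, x ∈ s} ≤ max ℵ₀ #s := by
  rw [← range_list_map_coe]
  exact mk_range_le.trans (mk_list_le_max s)

lemma mk_biUnion_finset_lt {ι : Type*} {κ : Cardinal.{u}} (hκ : ℵ₀ ≤ κ) (S : Finset ι)
    {f : ι → Set α} (hf : ∀ i ∈ S, #(f i) < κ) : #(⋃ i ∈ S, f i) < κ := by
  classical
  induction S using Finset.induction_on with
  | empty => simpa using aleph0_pos.trans_le hκ
  | insert i S _ ih =>
    rw [Finset.set_biUnion_insert]
    exact (mk_union_le _ _).trans_lt <| add_lt_of_lt hκ (hf i (by simp))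
      (ih fun j hj => hf j (by simp [hj]))

lemma mk_iUnion_nat_lt {κ : Cardinal.{u}} (hκ : κ.IsRegular) (hunc : ℵ₀ < κ)
    {f : ℕ → Set α} (hf : ∀ n, #(f n) < κ) : #(⋃ n, f n) < κ := by
  rw [← lift_uzero #(⋃ n, f n)]
  exact mk_iUnion_le_sum_mk_lift.trans_lt (sum_lt_lift_of_isRegular hκ (by simpa using hunc) hf)

end Cardinality

section ClosurePoints

variable {α : Type u}

def IsClosedUnder (g : List α → α) (s : Set α) : Prop :=
  ∀ l : List α, (∀ x ∈ l, x ∈ s) → g l ∈ s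

lemma IsClosedUnder.sUnion {g : List α → α} {D : Set (Set α)} (hne : D.Nonempty)
    (hdir : DirectedOn (· ⊆ ·) D) (hD : ∀ t ∈ D, IsClosedUnder g t) :
    IsClosedUnder g (⋃₀ D) := by
  intro l hl
  obtain ⟨t, htD, hlt⟩ :=
    hdir.exists_mem_subset_of_finite_of_subset_sUnion hne (List.finite_toSet l) hl
  exact ⟨t, htD, hD t htD l hlt⟩

def closureStep (g : List α → α) (t : Set α) : Set α :=
  t ∪ g '' {l | ∀ x ∈ l, x ∈ t}

def closureUnder (g : List α → α) (s : Set α) : Set α :=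
  ⋃ n, (closureStep g)^[n] s

lemma subset_closureUnder (g : List α → α) (s : Set α) : s ⊆ closureUnder g s :=
  subset_iUnion (fun n => (closureStep g)^[n] s) 0

lemma isClosedUnder_closureUnder (g : List α → α) (s : Set α) :
    IsClosedUnder g (closureUnder g s) := by
  classical
  intro l hl
  have hmono : Monotone fun n => (closureStep g)^[n] s := monotone_nat_of_le_succ fun n => by
    rw [Function.iterate_succ_apply']
    exact subset_union_left
  obtain ⟨n, hn⟩ := hmono.directed_le.exists_mem_subset_of_finset_subset_biUnion
    (s := l.toFinset) fun x hx => hl x (by simpa using hx)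
  refine mem_iUnion.2 ⟨n + 1, ?_⟩
  rw [Function.iterate_succ_apply']
  exact Or.inr ⟨l, fun x hx => hn (by simpa using hx), rfl⟩

lemma mk_closureUnder_lt {κ : Cardinal.{u}} (hκ : κ.IsRegular) (hunc : ℵ₀ < κ)
    (g : List α → α) {s : Set α} (hs : #s < κ) : #(closureUnder g s) < κ := by
  refine mk_iUnion_nat_lt hκ hunc fun n => ?_
  induction n with
  | zero => exact hs
  | succ n ih =>
    rw [Function.iterate_succ_apply']
    exact (mk_union_le _ _).trans_lt <| add_lt_of_lt hunc.le ih <|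
      mk_image_le.trans_lt <| (mk_setOf_forall_mem_list_le _).trans_lt (max_lt hunc ih)

lemma isClubK_setOf_isClosedUnder {κ : Cardinal.{u}} (hκ : κ.IsRegular) (hunc : ℵ₀ < κ)
    {o : Ordinal.{u}} (g : List o.ToType → o.ToType) :
    IsClubK κ o {s | s ∈ Pkl κ o ∧ IsClosedUnder g s} := by
  refine ⟨fun s hs => hs.1, fun D hDC hne hch hD => ⟨?_, ?_⟩, fun s hs => ?_⟩
  · rw [sUnion_eq_biUnion]
    exact (card_biUnion_lt_iff_forall_of_isRegular hκ hD).2 fun t ht => (hDC ht).1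
  · exact IsClosedUnder.sUnion hne hch.directedOn fun t ht => (hDC ht).2
  · exact ⟨closureUnder g s, ⟨mk_closureUnder_lt hκ hunc g hs, isClosedUnder_closureUnder g s⟩,
      subset_closureUnder g s⟩

end ClosurePoints

section ChainClosed

variable {α : Type u}

def ChainClosed (κ : Cardinal.{u}) (C : Set (Set α)) : Prop :=
  ∀ D ⊆ C, D.Nonempty → IsChain (· ⊆ ·) D → #D < κ → ⋃₀ D ∈ C

theorem Set.Infinite.exists_monotone_iUnion_eq {s : Set α} (hs : s.Infinite) :
    ∃ piece : (#s).ord.ToType → Set α,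
      Monotone piece ∧ (∀ i, #(piece i) < #s) ∧ ⋃ i, piece i = s := by
  have : NoMaxOrder (#s).ord.ToType := Ordinal.isSuccPrelimit_type_lt_iff.1 <| by
    rw [Ordinal.type_toType]
    exact (isSuccLimit_ord (Cardinal.infinite_iff.1 hs.to_subtype)).isSuccPrelimit
  obtain ⟨φ⟩ : Nonempty ((#s).ord.ToType ≃ s) := Cardinal.eq.mp (mk_ord_toType _)
  refine ⟨fun i => (fun j => (φ j : α)) '' Iio i, fun i j hij => image_mono (Iio_subset_Iio hij),
    fun i => mk_image_le.trans_lt ?_, (iUnion_subset fun i => ?_).antisymm fun x hx => ?_⟩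
  · simpa using mk_Iio_lt i (by rw [mk_ord_toType, Ordinal.type_toType])
  · rintro _ ⟨j, -, rfl⟩
    exact (φ j).2
  · obtain ⟨i, hi⟩ := NoMaxOrder.exists_gt (φ.symm ⟨x, hx⟩)
    exact mem_iUnion.2 ⟨i, _, hi, by simp⟩

theorem ChainClosed.biUnion_finset_mem {κ : Cardinal.{u}} {C : Set (Set α)}
    (hC : ChainClosed κ C) {F : Finset α → Set α} (hFC : ∀ e, F e ∈ C) (hF : Monotone F)
    {s : Set α} (hs : #s < κ) :
    ⋃ (e : Finset α) (_ : ↑e ⊆ s), F e ∈ C := by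
  induction hμ : #s using WellFoundedLT.induction generalizing s with
  | _ μ IH =>
  let U : Set α → Set α := fun t => ⋃ (e : Finset α) (_ : ↑e ⊆ t), F e
  change U s ∈ C
  rcases s.finite_or_infinite with hfin | hinf
  · have hU : U s = F hfin.toFinset :=
      (iUnion₂_subset fun e he => hF (by simpa [← Finset.coe_subset] using he)).antisymm
        (subset_iUnion₂_of_subset hfin.toFinset (by simp) subset_rfl)
    exact hU ▸ hFC _
  obtain ⟨piece, hpiece_mono, hpiece_lt, hpiece_union⟩ := hinf.exists_monotone_iUnion_eq
  have : Nonempty (#s).ord.ToType := by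
    obtain ⟨x, hx⟩ := hinf.nonempty
    rw [← hpiece_union, mem_iUnion] at hx
    exact hx.nonempty
  have hU_mono : Monotone U := fun t t' htt' =>
    iUnion₂_mono' fun e he => ⟨e, he.trans htt', subset_rfl⟩
  have hU : U s = ⋃₀ range (U ∘ piece) := by
    refine (iUnion₂_subset fun e he => ?_).antisymm (sUnion_subset ?_)
    · obtain ⟨i, hi⟩ := hpiece_mono.directed_le.exists_mem_subset_of_finset_subset_biUnion
        (hpiece_union ▸ he)
      have hFe : F e ⊆ U (piece i) := subset_iUnion₂_of_subset e hi subset_rfl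
      exact hFe.trans (subset_sUnion_of_mem ⟨i, rfl⟩)
    · rintro _ ⟨i, rfl⟩
      exact hU_mono (hpiece_union ▸ subset_iUnion piece i)
  rw [hU]
  refine hC _ ?_ (range_nonempty _) (hU_mono.comp hpiece_mono).isChain_range
    (mk_range_le.trans_lt (by rwa [mk_ord_toType]))
  rintro _ ⟨i, rfl⟩
  exact IH _ ((hpiece_lt i).trans_eq hμ) ((hpiece_lt i).trans hs) rfl

end ChainClosed

section FinsetHull

variable {α : Type u}

noncomputable def finsetHull [DecidableEq α] (hull : Set α → Set α) (e : Finset α) : Set α :=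
  hull (↑e ∪ ⋃ e' ∈ e.ssubsets, finsetHull hull e')
termination_by e.card
decreasing_by exact Finset.card_lt_card (Finset.mem_ssubsets.1 ‹_›)

theorem exists_monotone_finset_family {κ : Cardinal.{u}} (hκ : ℵ₀ ≤ κ) {C : Set (Set α)}
    (hsmall : ∀ t ∈ C, #t < κ) (hcofinal : ∀ s : Set α, #s < κ → ∃ t ∈ C, s ⊆ t) :
    ∃ F : Finset α → Set α, Monotone F ∧ ∀ e, F e ∈ C ∧ ↑e ⊆ F e := by
  classical
  choose! hull hull_mem subset_hull using hcofinal
  have key : ∀ e, finsetHull hull e ∈ C ∧ ↑e ⊆ finsetHull hull e ∧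
      ∀ e' ⊂ e, finsetHull hull e' ⊆ finsetHull hull e := by
    intro e
    induction e using Finset.strongInduction with
    | _ e IH =>
    have hsmall_arg : #(↑e ∪ ⋃ e' ∈ e.ssubsets, finsetHull hull e' : Set α) < κ :=
      (mk_union_le _ _).trans_lt <| add_lt_of_lt hκ ((finset_card_lt_aleph0 e).trans_le hκ) <|
        mk_biUnion_finset_lt hκ _ fun e' he' => hsmall _ (IH e' (Finset.mem_ssubsets.1 he')).1
    rw [finsetHull]
    refine ⟨hull_mem _ hsmall_arg, subset_union_left.trans (subset_hull _ hsmall_arg),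
      fun e' he' => ?_⟩
    exact (subset_biUnion_of_mem (Finset.mem_ssubsets.2 he')).trans <|
      subset_union_right.trans (subset_hull _ hsmall_arg)
  refine ⟨finsetHull hull, fun e e' h => ?_, fun e => ⟨(key e).1, (key e).2.1⟩⟩
  rcases h.eq_or_ssubset with rfl | h
  exacts [subset_rfl, (key e').2.2 e h]

end FinsetHull

section OrdAt

variable {o : Ordinal}

@[simp]
lemma ordAt_toTypeMk (γ : Ordinal) (h : γ < o) : ordAt (Ordinal.ToType.mk ⟨γ, h⟩) = γ := by
  simp [ordAt]

lemma ordAt_lt (x : o.ToType) : ordAt x < o :=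
  (Ordinal.ToType.mk.symm x).2

@[simp]
lemma toTypeMk_ordAt (x : o.ToType) : Ordinal.ToType.mk ⟨ordAt x, ordAt_lt x⟩ = x :=
  Ordinal.ToType.mk.apply_symm_apply x

end OrdAt

lemma List.exists_even_length_toFinset_eq {α : Type*} [DecidableEq α] (e : Finset α) :
    ∃ l : List α, Even l.length ∧ l.toFinset = e := by
  by_cases h : Even e.toList.length
  · exact ⟨e.toList, h, e.toList_toFinset⟩
  · obtain ⟨a, ha⟩ : e.Nonempty := by
      rw [Finset.nonempty_iff_ne_empty]
      rintro rfl
      simp at h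
    refine ⟨a :: e.toList, by simpa [Nat.even_add_one] using h, ?_⟩
    simp [Finset.insert_eq_self.2 ha]

section Coding

open Ordinal

variable {o : Ordinal.{u}} (F : Finset o.ToType → Set o.ToType)

noncomputable def sizeEnum (e : Finset o.ToType) : (#(F e)).ord.ToType ≃ F e :=
  (Cardinal.eq.1 (mk_ord_toType _)).some

variable [DecidableEq o.ToType] (hF : ∀ e, (#(F e)).ord < o)

noncomputable def sizeCode (e : Finset o.ToType) : o.ToType :=
  ToType.mk ⟨(#(F e)).ord, hF e⟩

/-- Even-length lists `l` code the order type of `F l.toFinset`; odd-length lists `x :: l` code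
the element of `F l.toFinset` enumerated at position `ordAt x`. -/
noncomputable def codingFun : List o.ToType → o.ToType
  | [] => sizeCode F hF ∅
  | x :: l =>
    if Even l.length then
      if h : ordAt x < (#(F l.toFinset)).ord then sizeEnum F l.toFinset (ToType.mk ⟨ordAt x, h⟩)
      else x
    else sizeCode F hF (x :: l).toFinset

lemma codingFun_of_even {l : List o.ToType} (hl : Even l.length) :
    codingFun F hF l = sizeCode F hF l.toFinset := by
  cases l with
  | nil => rfl
  | cons x l =>
    have : ¬ Even l.length := by simpa [Nat.even_add_one] using hl
    simp [codingFun, this]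

lemma codingFun_cons_of_even {l : List o.ToType} (hl : Even l.length) {x : o.ToType}
    (hx : ordAt x < (#(F l.toFinset)).ord) :
    codingFun F hF (x :: l) = sizeEnum F l.toFinset (ToType.mk ⟨ordAt x, hx⟩) := by
  simp [codingFun, hl, hx]

end Coding

theorem exists_forall_isClosedUnder_subset {κ : Cardinal.{u}} {o : Ordinal.{u}}
    (hκo : κ.ord ≤ o) (F : Finset o.ToType → Set o.ToType) (hF : ∀ e, #(F e) < κ) :
    ∃ g : List o.ToType → o.ToType, ∀ s, IsClosedUnder g s → InterKappaInKappa κ s →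
      ∀ e : Finset o.ToType, ↑e ⊆ s → F e ⊆ s := by
  classical
  have hFκ : ∀ e, (#(F e)).ord < κ.ord := fun e => ord_lt_ord.2 (hF e)
  have hFo : ∀ e, (#(F e)).ord < o := fun e => (hFκ e).trans_le hκo
  refine ⟨codingFun F hFo, fun s hs ⟨β, hβ, hsβ⟩ e he y hy => ?_⟩
  obtain ⟨l, hl, rfl⟩ := List.exists_even_length_toFinset_eq e
  have hl_mem : ∀ x ∈ l, x ∈ s := fun x hx => he (by simpa using hx)
  have hsize : (#(F l.toFinset)).ord < β := by
    have hcode := hs l hl_mem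
    rw [codingFun_of_even F hFo hl] at hcode
    simpa [sizeCode] using (hsβ _).1 ⟨hcode, by simpa [sizeCode] using hFκ _⟩
  set j := (sizeEnum F l.toFinset).symm ⟨y, hy⟩
  have hj : ordAt j < β := (ordAt_lt j).trans hsize
  set x : o.ToType := Ordinal.ToType.mk ⟨ordAt j, (hj.trans hβ).trans_le hκo⟩
  have hx : ordAt x < (#(F l.toFinset)).ord := by simpa [x] using ordAt_lt j
  have hxs : x ∈ s := ((hsβ x).2 (by simpa [x] using hj)).1
  have hy' := hs (x :: l) (List.forall_mem_cons.2 ⟨hxs, hl_mem⟩)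
  rw [codingFun_cons_of_even F hFo hl hx] at hy'
  simpa [x, j] using hy'

/-- (Foreman–Magidor–Shelah, Lemma 0.) Let `κ` be regular uncountable and `λ ≥ κ`.
A set `X ⊆ {s ∈ P_κ(λ) : s ∩ κ ∈ κ}` is stationary in `P_κ(λ)` iff for every
`g : λ^{<ω} → λ` there is `s ∈ X` closed under `g`. -/
theorem stmt6 (κ lam : Cardinal) (hreg : κ.IsRegular) (hunc : ℵ₀ < κ)
    (hkl : κ ≤ lam)
    (X : Set (Set lam.ord.ToType))
    (hX : X ⊆ {s | s ∈ Pkl κ lam.ord ∧ InterKappaInKappa κ s}) :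
    IsStatK κ lam.ord X ↔
      ∀ g : List lam.ord.ToType → lam.ord.ToType,
        ∃ s ∈ X, ∀ l : List lam.ord.ToType, (∀ x ∈ l, x ∈ s) → g l ∈ s := by
  constructor
  · intro hstat g
    obtain ⟨s, hsX, -, hsg⟩ := hstat _ (isClubK_setOf_isClosedUnder hreg hunc g)
    exact ⟨s, hsX, hsg⟩
  · intro H C hC
    obtain ⟨F, hF_mono, hF⟩ := exists_monotone_finset_family hunc.le (fun t ht => hC.1 ht) hC.2.2
    obtain ⟨g, hg⟩ := exists_forall_isClosedUnder_subset (ord_le_ord.2 hkl) F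
      fun e => hC.1 (hF e).1
    obtain ⟨s, hsX, hsg⟩ := H g
    obtain ⟨hs_small, hs_initial⟩ := hX hsX
    have hs : ⋃ (e : Finset _) (_ : ↑e ⊆ s), F e = s :=
      (iUnion₂_subset fun e he => hg s hsg hs_initial e he).antisymm fun x hx =>
        mem_iUnion₂.2 ⟨{x}, by simpa using hx, (hF {x}).2 (by simp)⟩
    exact ⟨s, hsX, hs ▸ ChainClosed.biUnion_finset_mem hC.2.1 (fun e => (hF e).1) hF_mono hs_small⟩
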